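/- Let G = ([N],E) be a connected graph with positive integer weights r_e. If for all nonempty I ⊊ [N]: (1/(N-1))·Σ_{e∈E} r_e ≤ (1/|I|)·Σ_{e∈E(I)∪E(I,[N]\I)} r_e, then the Nash-Williams–Tutte minimum min_P (1/(|P|-1))·Σ_{e∈E(P)} r_e over partitions P with |P| ≥ 2 is attained at the finest partition (into singletons) and equals (1/(N-1))·Σ_{e∈E} r_e. -/
import Mathlib


/-- Sum of edge weights over a set of (potential) edges. -/
noncomputable def wsum {N : ℕ} (r : Sym2 (Fin N) → ℝ) (s : Set (Sym2 (Fin N))) : ℝ :=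
  ∑ e ∈ (Set.toFinite s).toFinset, r e

lemma wsum_eq {N : ℕ} (r : Sym2 (Fin N) → ℝ) (s : Set (Sym2 (Fin N)))
    (F : Finset (Sym2 (Fin N))) (h : ∀ e, e ∈ F ↔ e ∈ s) :
    wsum r s = ∑ e ∈ F, r e := by
  unfold wsum
  apply Finset.sum_congr _ (fun _ _ => rfl)
  ext e
  simp [Set.Finite.mem_toFinset, h]

/-- If `(1/(N-1))·r[E] ≤ (1/|I|)·r[E(I) ∪ E(I,[N]\I)]` for all nonempty proper
`I` (no bottlenecks), then the Nash-Williams–Tutte minimum over partitions (given by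
surjections `f : Fin N → Fin p`, `p ≥ 2`) of `(1/(|P|-1))·Σ_{e∈E(P)} r_e` is attained at the
finest partition and equals `(1/(N-1))·Σ_{e∈E} r_e`: it is the least element of the set of
partition values. -/
theorem stmt_19 {N : ℕ} (hN : 2 ≤ N) (G : SimpleGraph (Fin N)) (hG : G.Connected)
    (r : Sym2 (Fin N) → ℕ) (hr : ∀ e ∈ G.edgeSet, 0 < r e)
    (h : ∀ I : Finset (Fin N), I.Nonempty → I ≠ Finset.univ →
      (1 / (N - 1 : ℝ)) * wsum (fun e => (r e : ℝ)) G.edgeSet ≤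
        (1 / (I.card : ℝ)) *
          wsum (fun e => (r e : ℝ)) {e | e ∈ G.edgeSet ∧ ∃ v ∈ e, v ∈ I}) :
    IsLeast {x : ℝ | ∃ p : ℕ, 2 ≤ p ∧ ∃ f : Fin N → Fin p, Function.Surjective f ∧
        x = (1 / (p - 1 : ℝ)) *
          wsum (fun e => (r e : ℝ)) {e | e ∈ G.edgeSet ∧ ∃ u v, e = s(u, v) ∧ f u ≠ f v}}
      ((1 / (N - 1 : ℝ)) * wsum (fun e => (r e : ℝ)) G.edgeSet) := by
  classical
  set r' : Sym2 (Fin N) → ℝ := fun e => (r e : ℝ) with hr'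
  set F : Finset (Sym2 (Fin N)) := G.edgeFinset with hF
  have hWF : wsum r' G.edgeSet = ∑ e ∈ F, r' e :=
    wsum_eq _ _ _ (fun e => SimpleGraph.mem_edgeFinset)
  set W : ℝ := ∑ e ∈ F, r' e with hWdef
  constructor
  · refine ⟨N, hN, id, Function.surjective_id, ?_⟩
    congr 2
    ext e
    induction e with
    | _ u v =>
      simp only [Set.mem_setOf_eq, SimpleGraph.mem_edgeSet, id]
      constructor
      · intro he
        exact ⟨he, u, v, rfl, G.ne_of_adj he⟩
      · rintro ⟨he, _⟩; exact he
  · rintro x ⟨p, hp, f, hf, rfl⟩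
    rw [hWF]
    set a : ℝ := (1 / ((N : ℝ) - 1)) * W with ha
    set Pc : Sym2 (Fin N) → Prop := fun e => ∃ u v, e = s(u, v) ∧ f u ≠ f v with hPc
    have hC : wsum r' {e | e ∈ G.edgeSet ∧ Pc e} = ∑ e ∈ F.filter Pc, r' e := by
      apply wsum_eq
      intro e
      simp [hF, SimpleGraph.mem_edgeFinset]
    rw [hC]
    set C : ℝ := ∑ e ∈ F.filter Pc, r' e with hCdef
    -- classes
    set A : Fin p → Finset (Fin N) := fun i => Finset.univ.filter (fun v => f v = i) with hAdef
    set inside : Fin p → Sym2 (Fin N) → Prop := fun i e => ∀ v ∈ e, f v = i with hins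
    set w : Fin p → ℝ := fun i => ∑ e ∈ F.filter (inside i), r' e with hwdef
    have hAne : ∀ i, (A i).Nonempty := by
      intro i
      obtain ⟨v, hv⟩ := hf i
      exact ⟨v, by simp [hAdef, hv]⟩
    -- per-class inequality
    have key1 : ∀ i : Fin p, (((A i)ᶜ.card : ℝ)) * a ≤ W - w i := by
      intro i
      have hIne : ((A i)ᶜ : Finset (Fin N)).Nonempty := by
        obtain ⟨j, hj⟩ : ∃ j : Fin p, j ≠ i := by
          have : Nontrivial (Fin p) := Fin.nontrivial_iff_two_le.mpr hp
          exact exists_ne i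
        obtain ⟨v, hv⟩ := hf j
        exact ⟨v, by simp [hAdef, hv, hj]⟩
      have hInu : ((A i)ᶜ : Finset (Fin N)) ≠ Finset.univ := by
        obtain ⟨v, hv⟩ := hAne i
        intro hcon
        have : v ∈ (A i)ᶜ := hcon ▸ Finset.mem_univ v
        simp [Finset.mem_compl] at this
        exact this hv
      have hh := h ((A i)ᶜ) hIne hInu
      rw [hWF] at hh
      have hT : wsum r' {e | e ∈ G.edgeSet ∧ ∃ v ∈ e, v ∈ (A i)ᶜ} =
          ∑ e ∈ F.filter (fun e => ¬ inside i e), r' e := by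
        apply wsum_eq
        intro e
        simp only [Finset.mem_filter, hF, SimpleGraph.mem_edgeFinset, Set.mem_setOf_eq,
          hins, Finset.mem_compl, hAdef, Finset.mem_filter, Finset.mem_univ, true_and]
        constructor
        · rintro ⟨he, hni⟩
          push_neg at hni
          obtain ⟨v, hv1, hv2⟩ := hni
          exact ⟨he, v, hv1, hv2⟩
        · rintro ⟨he, v, hv1, hv2⟩
          refine ⟨he, ?_⟩
          push_neg
          exact ⟨v, hv1, hv2⟩
      rw [hT] at hh
      have hsplit : ∑ e ∈ F.filter (fun e => ¬ inside i e), r' e = W - w i := by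
        have := Finset.sum_filter_add_sum_filter_not F (inside i) r'
        rw [hwdef]
        linarith [this]
      rw [hsplit] at hh
      have hcpos : (0 : ℝ) < ((A i)ᶜ.card : ℝ) := by
        exact_mod_cast Finset.card_pos.mpr hIne
      rw [one_div_mul_eq_div, one_div_mul_eq_div, le_div_iff₀ hcpos] at hh
      have hca : ((A i)ᶜ.card : ℝ) * a = W / ((N : ℝ) - 1) * ((A i)ᶜ.card : ℝ) := by
        rw [ha]; ring
      linarith [hh]
    -- sum over classes
    have hsumcard : ∑ i : Fin p, (((A i)ᶜ.card : ℝ)) = p * N - N := by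
      have hfib : ∑ i : Fin p, (A i).card = N := by
        have := Finset.card_eq_sum_card_fiberwise
          (f := f) (s := (Finset.univ : Finset (Fin N))) (t := Finset.univ)
          (fun v _ => Finset.mem_univ _)
        simpa [hAdef] using this.symm
      have hcast : ∀ i : Fin p, (((A i)ᶜ.card : ℝ)) = (N : ℝ) - ((A i).card : ℝ) := by
        intro i
        rw [Finset.card_compl]
        have hle : (A i).card ≤ Fintype.card (Fin N) := Finset.card_le_univ _
        push_cast [Nat.cast_sub hle]
        simp
      rw [Finset.sum_congr rfl (fun i _ => hcast i)]
      rw [Finset.sum_sub_distrib, Finset.sum_const, Finset.card_univ, Fintype.card_fin]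
      push_cast [← hfib]
      ring
    have hsumw : ∑ i : Fin p, w i = W - C := by
      have hrw : ∀ i : Fin p, w i = ∑ e ∈ F, if inside i e then r' e else 0 := by
        intro i; rw [hwdef]; simp [Finset.sum_filter]
      rw [Finset.sum_congr rfl (fun i _ => hrw i), Finset.sum_comm]
      have hedge : ∀ e ∈ F, (∑ i : Fin p, if inside i e then r' e else 0) =
          if Pc e then 0 else r' e := by
        intro e he
        induction e with
        | _ u v =>
          have huv : u ≠ v := by
            rw [hF, SimpleGraph.mem_edgeFinset] at he
            exact G.ne_of_adj he
          have hins' : ∀ i, inside i s(u, v) ↔ (f u = i ∧ f v = i) := by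
            intro i
            simp only [hins, Sym2.mem_iff]
            constructor
            · intro hh; exact ⟨hh u (Or.inl rfl), hh v (Or.inr rfl)⟩
            · rintro ⟨h1, h2⟩ x (rfl | rfl) <;> assumption
          have hPc' : Pc s(u, v) ↔ f u ≠ f v := by
            simp only [hPc]
            constructor
            · rintro ⟨a, b, hab, hne⟩
              rw [Sym2.eq_iff] at hab
              rcases hab with ⟨rfl, rfl⟩ | ⟨rfl, rfl⟩
              · exact hne
              · exact hne.symm
            · intro hne; exact ⟨u, v, rfl, hne⟩
          by_cases hfuv : f u = f v
          · rw [if_neg (by rw [hPc']; simpa using hfuv)]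
            have : ∀ i : Fin p, (if inside i s(u,v) then r' s(u,v) else 0) =
                if i = f u then r' s(u,v) else 0 := by
              intro i
              congr 1
              simp only [hins' i, eq_iff_iff]
              constructor
              · rintro ⟨h1, _⟩; exact h1.symm
              · rintro rfl; exact ⟨rfl, hfuv.symm⟩
            rw [Finset.sum_congr rfl (fun i _ => this i)]
            simp
          · rw [if_pos (hPc'.mpr hfuv)]
            apply Finset.sum_eq_zero
            intro i _
            rw [if_neg]
            rw [hins' i]
            rintro ⟨h1, h2⟩
            exact hfuv (h1.trans h2.symm)
      rw [Finset.sum_congr rfl hedge]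
      have := Finset.sum_filter_add_sum_filter_not F Pc r'
      rw [hCdef]
      have h2 : ∑ e ∈ F, (if Pc e then (0:ℝ) else r' e) =
          ∑ e ∈ F.filter (fun e => ¬ Pc e), r' e := by
        rw [Finset.sum_filter]
        apply Finset.sum_congr rfl
        intro e _
        by_cases hp : Pc e <;> simp [hp]
      rw [h2]
      linarith [this]
    have key : ((p : ℝ) * N - N) * a ≤ (p : ℝ) * W - (W - C) := by
      calc ((p : ℝ) * N - N) * a = ∑ i : Fin p, (((A i)ᶜ.card : ℝ)) * a := by
            rw [← Finset.sum_mul, hsumcard]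
        _ ≤ ∑ i : Fin p, (W - w i) := Finset.sum_le_sum (fun i _ => key1 i)
        _ = (p : ℝ) * W - (W - C) := by
            rw [Finset.sum_sub_distrib, Finset.sum_const, Finset.card_univ, Fintype.card_fin,
              hsumw]
            ring
    -- final arithmetic
    have hN1 : (1 : ℝ) < (N : ℝ) := by exact_mod_cast Nat.lt_of_lt_of_le one_lt_two hN
    have hp1 : (1 : ℝ) < (p : ℝ) := by exact_mod_cast Nat.lt_of_lt_of_le one_lt_two hp
    have hne : ((N : ℝ) - 1) ≠ 0 := by linarith
    have hWa : a * ((N : ℝ) - 1) = W := by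
      rw [ha, one_div_mul_eq_div, div_mul_cancel₀ _ hne]
    rw [one_div_mul_eq_div, le_div_iff₀ (by linarith : (0:ℝ) < (p:ℝ) - 1)]
    nlinarith [key, hWa]
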